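/- Let A be a complex n×n matrix, b ∈ ℂⁿ, and x* ∈ ℂⁿ with A x* = b. Let π : {1,…,n} → {1,…,m} be a map assigning each index to a block, and let M and F be invertible complex n×n matrices that are block diagonal with respect to π, i.e., M_{i,j} = 0 and F_{i,j} = 0 whenever π(i) ≠ π(j). Let Q = [[0, I - M⁻¹A], [I - F⁻¹A, 0]] and assume ρ(|Q|) < 1. Let Ω_k ⊆ {1,…,m} for each k ∈ ℕ be such that every s ∈ {1,…,m} belongs to Ω_k for infinitely many k, and for each s ∈ {1,…,m} let δ_s : {1,…,m} × ℕ → ℕ satisfy δ_s(q,k) ≤ k for all q, k and lim_{k→∞} δ_s(q,k) = ∞ for all q. Let x⁰ ∈ ℂⁿ be arbitrary and define sequences (yᵏ)_{k∈ℕ} and (xᵏ)_{k∈ℕ} in ℂⁿ by: for every k and every index i with s := π(i), yᵏ_i := x^{δ_s(s,k)}_i + Σ_j (M⁻¹)_{i,j} (b_j − Σ_l A_{j,l} x^{δ_s(π(l),k)}_l); and x^{k+1}_i := y^{δ_s(s,k)}_i + Σ_j (F⁻¹)_{i,j} (b_j − Σ_l A_{j,l} y^{δ_s(π(l),k)}_l)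 if s ∈ Ω_k, while x^{k+1}_i := xᵏ_i if s ∉ Ω_k. Then xᵏ converges to x* as k → ∞. -/

import Mathlib

/-!
Write `e k` and `f k` for the componentwise moduli of the errors `x k - x*` and `y k - x*`.
Each half-step is an affine correction whose error is multiplied by `Q₁ = I - M⁻¹A`, resp.
`Q₂ = I - F⁻¹A`, so `f k ≤ |Q₁| e` and, on updated blocks, `e (k+1) ≤ |Q₂| f`, with the right
sides read at delayed times. Since `|Q|` is nonnegative with `ρ(|Q|) < 1`, Gelfand's formula
gives a power `|Q|ᵏ` with row sums `c < 1`, and then `w = ∑_{p<k} |Q|ᵖ 1` is a positive vector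
with `|Q| w ≤ γ w` for some `γ < 1`. In the max-norm weighted by `w` the errors stay bounded,
and a bound `a` valid from some time on improves to `γ² a` once all delays have passed that
time and every block has been updated since. Iterating gives convergence.
-/

open Matrix Filter

/-- Spectral radius of a real square matrix: the supremum of the moduli of its
complex eigenvalues. -/
noncomputable def specRad {m : Type*} [Fintype m] [DecidableEq m]
    (A : Matrix m m ℝ) : ℝ :=
  sSup ((fun z : ℂ => ‖z‖) '' spectrum ℂ (A.map Complex.ofReal))

/-- Entrywise absolute value (modulus) of a complex matrix. -/
noncomputable def cabs {m l : Type*} (A : Matrix m l ℂ) : Matrix m l ℝ :=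
  fun i j => ‖A i j‖

open Finset Topology

theorem cabs_nonneg {m l : Type*} (A : Matrix m l ℂ) (i : m) (j : l) : 0 ≤ cabs A i j :=
  norm_nonneg _

theorem cabs_fromBlocks {m l p q : Type*} (A : Matrix m p ℂ) (B : Matrix m q ℂ)
    (C : Matrix l p ℂ) (D : Matrix l q ℂ) :
    cabs (fromBlocks A B C D) = fromBlocks (cabs A) (cabs B) (cabs C) (cabs D) := by
  ext (i | i) (j | j) <;> rfl

theorem cabs_zero {m l : Type*} : cabs (0 : Matrix m l ℂ) = 0 := by
  ext i j
  simp [cabs]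

theorem correction_sub_eq {R n : Type*} [CommRing R] [Fintype n] [DecidableEq n]
    {A : Matrix n n R} {b xstar : n → R} (hsol : A *ᵥ xstar = b) (B : Matrix n n R)
    (z : n → R) (i : n) :
    z i + ∑ j, B i j * (b j - ∑ l, A j l * z l) - xstar i = ((1 - B * A) *ᵥ (z - xstar)) i := by
  rw [sub_mulVec, one_mulVec, ← mulVec_mulVec, ← hsol]
  simp only [mulVec, dotProduct, Pi.sub_apply, mul_sub, sum_sub_distrib]
  ring

theorem norm_correction_sub_le {n : Type*} [Fintype n] [DecidableEq n]
    {A : Matrix n n ℂ} {b xstar : n → ℂ} (hsol : A *ᵥ xstar = b) (B : Matrix n n ℂ)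
    (z : n → ℂ) (i : n) :
    ‖z i + ∑ j, B i j * (b j - ∑ l, A j l * z l) - xstar i‖ ≤
      ∑ l, cabs (1 - B * A) i l * ‖z l - xstar l‖ := by
  rw [correction_sub_eq hsol]
  exact (norm_sum_le _ _).trans_eq (sum_congr rfl fun _ _ => norm_mul _ _)

structure IsWeightedContraction {ι κ : Type*} [Fintype κ] (T : Matrix ι κ ℝ) (u : κ → ℝ)
    (v : ι → ℝ) (γ : ℝ) : Prop where
  nonneg : ∀ i l, 0 ≤ T i l
  sum_mul_le : ∀ i, ∑ l, T i l * u l ≤ γ * v i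

namespace IsWeightedContraction

variable {ι κ : Type*} [Fintype κ] {T : Matrix ι κ ℝ} {u : κ → ℝ} {v : ι → ℝ} {γ : ℝ}

theorem sum_mul_le_of_le (h : IsWeightedContraction T u v γ) {a : ℝ} (ha : 0 ≤ a)
    {E : κ → ℝ} (hE : ∀ l, E l ≤ a * u l) (i : ι) : ∑ l, T i l * E l ≤ γ * a * v i :=
  calc ∑ l, T i l * E l ≤ ∑ l, T i l * (a * u l) :=
        sum_le_sum fun l _ => mul_le_mul_of_nonneg_left (hE l) (h.nonneg i l)
    _ = a * ∑ l, T i l * u l := by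
        rw [mul_sum]
        exact sum_congr rfl fun l _ => by ring
    _ ≤ a * (γ * v i) := mul_le_mul_of_nonneg_left (h.sum_mul_le i) ha
    _ = γ * a * v i := by ring

theorem of_fromBlocks_zero [Fintype ι] {B : Matrix ι κ ℝ} {C : Matrix κ ι ℝ} {w : ι ⊕ κ → ℝ}
    (h : IsWeightedContraction (fromBlocks 0 B C 0) w w γ) :
    IsWeightedContraction B (w ∘ Sum.inr) (w ∘ Sum.inl) γ ∧
      IsWeightedContraction C (w ∘ Sum.inl) (w ∘ Sum.inr) γ :=
  ⟨⟨fun i l => h.nonneg (.inl i) (.inr l),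
      fun i => by simpa [Fintype.sum_sum_type] using h.sum_mul_le (.inl i)⟩,
    ⟨fun i l => h.nonneg (.inr i) (.inl l),
      fun i => by simpa [Fintype.sum_sum_type] using h.sum_mul_le (.inr i)⟩⟩

end IsWeightedContraction

theorem exists_isWeightedContraction_of_pow {N : Type*} [Fintype N] [DecidableEq N]
    {T : Matrix N N ℝ} (hT : ∀ i j, 0 ≤ T i j) {k : ℕ} (hk : 0 < k) {c : ℝ} (hc0 : 0 ≤ c)
    (hc1 : c < 1) (hrow : ∀ i, ∑ j, (T ^ k) i j ≤ c) :
    ∃ w : N → ℝ, (∀ i, 0 < w i) ∧ ∃ γ, 0 ≤ γ ∧ γ < 1 ∧ IsWeightedContraction T w w γ := by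
  set w : N → ℝ := ∑ p ∈ range k, T ^ p *ᵥ 1 with hw
  have hpow : ∀ p i, 0 ≤ (T ^ p *ᵥ 1) i := fun p i =>
    sum_nonneg fun j _ => by simpa using pow_apply_nonneg hT p i j
  have hw1 : ∀ i, 1 ≤ w i := fun i => by
    simpa [hw, Finset.sum_apply] using
      single_le_sum (f := fun p => (T ^ p *ᵥ 1) i) (fun p _ => hpow p i) (mem_range.2 hk)
  have hTw : T *ᵥ w + 1 = w + T ^ k *ᵥ 1 := by
    have := (sum_range_succ' (fun p => T ^ p *ᵥ (1 : N → ℝ)) k).symm.trans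
      (sum_range_succ (fun p => T ^ p *ᵥ (1 : N → ℝ)) k)
    simpa [hw, mulVec_sum, mulVec_mulVec, pow_succ'] using this
  -- `W` bounds every `w i`, so subtracting `1 - c` removes at least the fraction `(1 - c) / W`.
  set W := 1 + ∑ i, w i
  have hw0 : ∀ i, 0 ≤ w i := fun i => zero_le_one.trans (hw1 i)
  have hwW : ∀ i, w i ≤ W := fun i =>
    (single_le_sum (fun j _ => hw0 j) (mem_univ i)).trans (le_add_of_nonneg_left zero_le_one)
  have hW : 1 ≤ W := le_add_of_nonneg_right (sum_nonneg fun j _ => hw0 j)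
  refine ⟨w, fun i => one_pos.trans_le (hw1 i), 1 - (1 - c) / W, ?_, ?_, hT, fun i => ?_⟩
  · exact sub_nonneg.2 ((div_le_one (by linarith)).2 (by linarith))
  · exact sub_lt_self _ (div_pos (by linarith) (by linarith))
  · have hTwi : ∑ l, T i l * w l + 1 = w i + ∑ j, (T ^ k) i j := by
      simpa [mulVec, dotProduct] using congrFun hTw i
    have hscale : (1 - c) / W * w i ≤ 1 - c :=
      calc (1 - c) / W * w i ≤ (1 - c) / W * W :=
            mul_le_mul_of_nonneg_left (hwW i) (div_nonneg (by linarith) (by linarith))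
        _ = 1 - c := div_mul_cancel₀ _ (by linarith)
    linarith [hrow i]

section LinftyNorm

attribute [local instance] Matrix.linftyOpSeminormedAddCommGroup Matrix.linftyOpNormedRing
  Matrix.linftyOpNormedAlgebra

theorem sum_norm_apply_le_linfty_opNorm {m n α : Type*} [Fintype m] [Fintype n]
    [SeminormedAddCommGroup α] (A : Matrix m n α) (i : m) : ∑ j, ‖A i j‖ ≤ ‖A‖ := by
  rw [linfty_opNorm_def]
  simpa only [NNReal.coe_sum, coe_nnnorm] using NNReal.coe_le_coe.2
    (le_sup (f := fun i => ∑ j, ‖A i j‖₊) (mem_univ i))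

theorem exists_norm_pow_lt_one_of_spectralRadius_lt_one {A : Type*} [NormedRing A]
    [NormedAlgebra ℂ A] [CompleteSpace A] {a : A} (ha : spectralRadius ℂ a < 1) :
    ∃ k, 0 < k ∧ ‖a ^ k‖ < 1 := by
  obtain ⟨k, hk, hk0⟩ :=
    (((spectrum.pow_norm_pow_one_div_tendsto_nhds_spectralRadius a).eventually_lt_const ha).and
      (eventually_gt_atTop 0)).exists
  refine ⟨k, hk0, ?_⟩
  rwa [ENNReal.ofReal_lt_one, Real.rpow_lt_one_iff' (norm_nonneg _) (by positivity)] at hk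

theorem spectralRadius_map_ofReal_le_specRad {N : Type*} [Fintype N] [DecidableEq N]
    (T : Matrix N N ℝ) :
    spectralRadius ℂ (T.map Complex.ofReal) ≤ ENNReal.ofReal (specRad T) := by
  have hbdd : BddAbove ((fun z : ℂ => ‖z‖) '' spectrum ℂ (T.map Complex.ofReal)) :=
    (spectrum.isCompact _).bddAbove_image continuous_norm.continuousOn
  refine iSup₂_le fun z hz => ?_
  rw [← enorm_eq_nnnorm, ← ofReal_norm]
  exact ENNReal.ofReal_le_ofReal (le_csSup hbdd ⟨z, hz, rfl⟩)

theorem exists_sum_pow_le_of_specRad_lt_one {N : Type*} [Fintype N] [DecidableEq N]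
    {T : Matrix N N ℝ} (hT : ∀ i j, 0 ≤ T i j) (hρ : specRad T < 1) :
    ∃ k, 0 < k ∧ ∃ c, 0 ≤ c ∧ c < 1 ∧ ∀ i, ∑ j, (T ^ k) i j ≤ c := by
  obtain ⟨k, hk, hnorm⟩ := exists_norm_pow_lt_one_of_spectralRadius_lt_one
    ((spectralRadius_map_ofReal_le_specRad T).trans_lt (ENNReal.ofReal_lt_one.2 hρ))
  refine ⟨k, hk, _, norm_nonneg _, hnorm, fun i => ?_⟩
  have hmap : T.map Complex.ofReal ^ k = (T ^ k).map Complex.ofReal :=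
    (Matrix.map_pow T Complex.ofRealHom k).symm
  calc ∑ j, (T ^ k) i j = ∑ j, ‖(T.map Complex.ofReal ^ k) i j‖ := by
        simp [hmap, Complex.norm_real, abs_of_nonneg (pow_apply_nonneg hT k i _)]
    _ ≤ _ := sum_norm_apply_le_linfty_opNorm _ i

end LinftyNorm

theorem exists_isWeightedContraction_of_specRad_lt_one {N : Type*} [Fintype N] [DecidableEq N]
    {T : Matrix N N ℝ} (hT : ∀ i j, 0 ≤ T i j) (hρ : specRad T < 1) :
    ∃ w : N → ℝ, (∀ i, 0 < w i) ∧ ∃ γ, 0 ≤ γ ∧ γ < 1 ∧ IsWeightedContraction T w w γ := by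
  obtain ⟨k, hk, c, hc0, hc1, hrow⟩ := exists_sum_pow_le_of_specRad_lt_one hT hρ
  exact exists_isWeightedContraction_of_pow hT hk hc0 hc1 hrow

theorem exists_le_mul_of_pos {ι : Type*} [Fintype ι] (f : ι → ℝ) {u : ι → ℝ}
    (hu : ∀ i, 0 < u i) : ∃ c, 0 ≤ c ∧ ∀ i, f i ≤ c * u i := by
  have hterm : ∀ i, 0 ≤ |f i| / u i := fun i => div_nonneg (abs_nonneg _) (hu i).le
  refine ⟨∑ i, |f i| / u i, sum_nonneg fun i _ => hterm i, fun i => ?_⟩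
  calc f i ≤ |f i| / u i * u i := by rw [div_mul_cancel₀ _ (hu i).ne']; exact le_abs_self _
    _ ≤ (∑ j, |f j| / u j) * u i :=
        mul_le_mul_of_nonneg_right (single_le_sum (fun j _ => hterm j) (mem_univ i)) (hu i).le

theorem eventually_le_of_frequently_update {s : ℕ → ℝ} {p : ℕ → Prop} {B : ℝ}
    (hp : ∃ᶠ k in atTop, p k) (hupd : ∀ᶠ k in atTop, p k → s (k + 1) ≤ B)
    (hkeep : ∀ k, ¬ p k → s (k + 1) = s k) : ∀ᶠ k in atTop, s k ≤ B := by
  obtain ⟨K, hK⟩ := eventually_atTop.1 hupd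
  obtain ⟨k₀, hk₀, hpk₀⟩ := frequently_atTop.1 hp K
  refine eventually_atTop.2 ⟨k₀ + 1, fun k hk => ?_⟩
  induction k, hk using Nat.le_induction with
  | base => exact hK k₀ hk₀ hpk₀
  | succ k hk ih =>
    by_cases hpk : p k
    · exact hK k (by omega) hpk
    · rw [hkeep k hpk]
      exact ih

theorem eventually_forall_delay {ι : Type*} [Finite ι] {d : ι → ι → ℕ → ℕ}
    (hd : ∀ i l, Tendsto (d i l) atTop atTop) {P : ℕ → Prop} (hP : ∀ᶠ j in atTop, P j) :
    ∀ᶠ k in atTop, ∀ i l, P (d i l k) :=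
  eventually_all.2 fun i => eventually_all.2 fun l => hd i l hP

/-- `ex k i` and `ey k i` bound the errors of the two iterates; `d i l k` is the time at which
component `l` is read when component `i` is computed at step `k`, and `U k i` says that `i` is
updated at step `k`. -/
structure IsAsyncTwoStageBound {ι : Type*} [Fintype ι] (T₁ T₂ : Matrix ι ι ℝ)
    (d : ι → ι → ℕ → ℕ) (U : ℕ → ι → Prop) (ex ey : ℕ → ι → ℝ) : Prop where
  ey_le : ∀ k i, ey k i ≤ ∑ l, T₁ i l * ex (d i l k) l
  ex_succ_le : ∀ k i, U k i → ex (k + 1) i ≤ ∑ l, T₂ i l * ey (d i l k) l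
  ex_succ_eq : ∀ k i, ¬ U k i → ex (k + 1) i = ex k i

namespace IsAsyncTwoStageBound

variable {ι : Type*} [Fintype ι] {T₁ T₂ : Matrix ι ι ℝ} {d : ι → ι → ℕ → ℕ}
  {U : ℕ → ι → Prop} {ex ey : ℕ → ι → ℝ} {u v : ι → ℝ} {γ : ℝ}

theorem ex_succ_le_mul (h : IsAsyncTwoStageBound T₁ T₂ d U ex ey)
    (hT₁ : IsWeightedContraction T₁ u v γ) (hT₂ : IsWeightedContraction T₂ v u γ) (hγ : 0 ≤ γ)
    {a : ℝ} (ha : 0 ≤ a) {k : ℕ} {i : ι} (hU : U k i)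
    (hx : ∀ l l', ex (d l l' (d i l k)) l' ≤ a * u l') : ex (k + 1) i ≤ γ ^ 2 * a * u i := by
  have hy : ∀ l, ey (d i l k) l ≤ γ * a * v l := fun l =>
    (h.ey_le _ l).trans (hT₁.sum_mul_le_of_le ha (hx l) l)
  calc ex (k + 1) i ≤ γ * (γ * a) * u i :=
        (h.ex_succ_le k i hU).trans (hT₂.sum_mul_le_of_le (mul_nonneg hγ ha) hy i)
    _ = γ ^ 2 * a * u i := by ring

theorem le_mul_of_le_mul_zero (h : IsAsyncTwoStageBound T₁ T₂ d U ex ey)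
    (hT₁ : IsWeightedContraction T₁ u v γ) (hT₂ : IsWeightedContraction T₂ v u γ) (hγ0 : 0 ≤ γ)
    (hγ1 : γ ≤ 1) (hu : ∀ i, 0 ≤ u i) (hd : ∀ i l k, d i l k ≤ k) {c : ℝ} (hc : 0 ≤ c)
    (h0 : ∀ i, ex 0 i ≤ c * u i) : ∀ k i, ex k i ≤ c * u i := by
  intro k
  induction k using Nat.strong_induction_on with
  | _ k ih =>
    cases k with
    | zero => exact h0
    | succ k =>
      intro i
      by_cases hU : U k i
      · have hread : ∀ l l', ex (d l l' (d i l k)) l' ≤ c * u l' := fun l l' =>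
          ih _ (by have := hd l l' (d i l k); have := hd i l k; omega) l'
        calc ex (k + 1) i ≤ γ ^ 2 * (c * u i) := by
              simpa only [mul_assoc] using h.ex_succ_le_mul hT₁ hT₂ hγ0 hc hU hread
          _ ≤ c * u i :=
              mul_le_of_le_one_left (mul_nonneg hc (hu i)) (pow_le_one₀ hγ0 hγ1)
      · rw [h.ex_succ_eq k i hU]
        exact ih k (Nat.lt_succ_self k) i

theorem eventually_le_sq_mul (h : IsAsyncTwoStageBound T₁ T₂ d U ex ey)
    (hT₁ : IsWeightedContraction T₁ u v γ) (hT₂ : IsWeightedContraction T₂ v u γ) (hγ : 0 ≤ γ)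
    (hd : ∀ i l, Tendsto (d i l) atTop atTop) (hU : ∀ i, ∃ᶠ k in atTop, U k i) {a : ℝ}
    (ha : 0 ≤ a) (hex : ∀ᶠ k in atTop, ∀ i, ex k i ≤ a * u i) :
    ∀ᶠ k in atTop, ∀ i, ex k i ≤ γ ^ 2 * a * u i := by
  have hread : ∀ᶠ k in atTop, ∀ i l l', ex (d l l' (d i l k)) l' ≤ a * u l' :=
    (eventually_forall_delay hd (eventually_forall_delay hd hex)).mono
      fun k hk i l l' => hk i l l l' l'
  exact eventually_all.2 fun i => eventually_le_of_frequently_update (hU i)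
    (hread.mono fun k hk hUk => h.ex_succ_le_mul hT₁ hT₂ hγ ha hUk (hk i)) (h.ex_succ_eq · i)

theorem tendsto_zero (h : IsAsyncTwoStageBound T₁ T₂ d U ex ey)
    (hT₁ : IsWeightedContraction T₁ u v γ) (hT₂ : IsWeightedContraction T₂ v u γ) (hγ0 : 0 ≤ γ)
    (hγ1 : γ < 1) (hu : ∀ i, 0 < u i) (hd_le : ∀ i l k, d i l k ≤ k)
    (hd : ∀ i l, Tendsto (d i l) atTop atTop) (hU : ∀ i, ∃ᶠ k in atTop, U k i)
    (hnonneg : ∀ k i, 0 ≤ ex k i) (i : ι) : Tendsto (fun k => ex k i) atTop (𝓝 0) := by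
  obtain ⟨c, hc, h0⟩ := exists_le_mul_of_pos (ex 0) hu
  have hdecay : ∀ p : ℕ, ∀ᶠ k in atTop, ∀ i, ex k i ≤ (γ ^ 2) ^ p * c * u i := by
    intro p
    induction p with
    | zero =>
      refine Eventually.of_forall fun k i => ?_
      simpa using h.le_mul_of_le_mul_zero hT₁ hT₂ hγ0 hγ1.le (fun i => (hu i).le) hd_le hc h0 k i
    | succ p ih =>
      filter_upwards [h.eventually_le_sq_mul hT₁ hT₂ hγ0 hd hU (by positivity) ih] with k hk i
      simpa only [pow_succ', mul_assoc] using hk i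
  have hlim : Tendsto (fun p : ℕ => (γ ^ 2) ^ p * c * u i) atTop (𝓝 0) := by
    simpa using ((tendsto_pow_atTop_nhds_zero_of_lt_one (sq_nonneg γ)
      (pow_lt_one₀ hγ0 hγ1 two_ne_zero)).mul_const c).mul_const (u i)
  refine tendsto_order.2 ⟨fun a ha => Eventually.of_forall fun k => ha.trans_le (hnonneg k i),
    fun ε hε => ?_⟩
  obtain ⟨p, hp⟩ := (hlim.eventually (gt_mem_nhds hε)).exists
  exact (hdecay p).mono fun k hk => (hk i).trans_lt hp

end IsAsyncTwoStageBound

theorem stmt8_general {n m : ℕ}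
    (A M F : Matrix (Fin n) (Fin n) ℂ) (b xstar : Fin n → ℂ)
    (hsol : A.mulVec xstar = b)
    (π : Fin n → Fin m)
    (hQ : specRad (cabs (Matrix.fromBlocks 0 (1 - M⁻¹ * A) (1 - F⁻¹ * A) 0)) < 1)
    (Ω : ℕ → Set (Fin m))
    (hΩ : ∀ s : Fin m, ∀ K : ℕ, ∃ k ≥ K, s ∈ Ω k)
    (δ : Fin m → Fin m → ℕ → ℕ)
    (hδle : ∀ s q k, δ s q k ≤ k)
    (hδlim : ∀ s q, Tendsto (fun k => δ s q k) atTop atTop)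
    (x y : ℕ → Fin n → ℂ)
    (hy : ∀ k i, y k i =
      x (δ (π i) (π i) k) i +
        ∑ j, M⁻¹ i j * (b j - ∑ l, A j l * x (δ (π i) (π l) k) l))
    (hupd : ∀ k i, π i ∈ Ω k → x (k + 1) i =
      y (δ (π i) (π i) k) i +
        ∑ j, F⁻¹ i j * (b j - ∑ l, A j l * y (δ (π i) (π l) k) l))
    (hkeep : ∀ k i, π i ∉ Ω k → x (k + 1) i = x k i) :
    Tendsto x atTop (nhds xstar) := by
  obtain ⟨w, hw, γ, hγ0, hγ1, hT⟩ :=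
    exists_isWeightedContraction_of_specRad_lt_one (cabs_nonneg _) hQ
  rw [cabs_fromBlocks, cabs_zero] at hT
  obtain ⟨hT₁, hT₂⟩ := hT.of_fromBlocks_zero
  have hbound : IsAsyncTwoStageBound (cabs (1 - M⁻¹ * A)) (cabs (1 - F⁻¹ * A))
      (fun i l k => δ (π i) (π l) k) (fun k i => π i ∈ Ω k)
      (fun k i => ‖x k i - xstar i‖) (fun k i => ‖y k i - xstar i‖) := by
    refine ⟨fun k i => ?_, fun k i hk => ?_, fun k i hk => by simp only [hkeep k i hk]⟩
    · rw [hy k i]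
      exact norm_correction_sub_le hsol _ (fun l => x (δ (π i) (π l) k) l) i
    · rw [hupd k i hk]
      exact norm_correction_sub_le hsol _ (fun l => y (δ (π i) (π l) k) l) i
  refine tendsto_pi_nhds.2 fun i => tendsto_iff_norm_sub_tendsto_zero.2 ?_
  exact hbound.tendsto_zero hT₁ hT₂ hγ0 hγ1 (fun _ => hw _) (fun _ _ => hδle _ _)
    (fun _ _ => hδlim _ _) (fun i => frequently_atTop.2 (hΩ (π i))) (fun _ _ => norm_nonneg _) i

theorem stmt8 {n m : ℕ}
    (A M F : Matrix (Fin n) (Fin n) ℂ) (b xstar : Fin n → ℂ)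
    (hsol : A.mulVec xstar = b)
    (π : Fin n → Fin m)
    (hMunit : IsUnit M) (hFunit : IsUnit F)
    (hMblock : ∀ i j, π i ≠ π j → M i j = 0)
    (hFblock : ∀ i j, π i ≠ π j → F i j = 0)
    (hQ : specRad (cabs (Matrix.fromBlocks 0 (1 - M⁻¹ * A) (1 - F⁻¹ * A) 0)) < 1)
    (Ω : ℕ → Set (Fin m))
    (hΩ : ∀ s : Fin m, ∀ K : ℕ, ∃ k ≥ K, s ∈ Ω k)
    (δ : Fin m → Fin m → ℕ → ℕ)
    (hδle : ∀ s q k, δ s q k ≤ k)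
    (hδlim : ∀ s q, Tendsto (fun k => δ s q k) atTop atTop)
    (x y : ℕ → Fin n → ℂ)
    (hy : ∀ k i, y k i =
      x (δ (π i) (π i) k) i +
        ∑ j, M⁻¹ i j * (b j - ∑ l, A j l * x (δ (π i) (π l) k) l))
    (hupd : ∀ k i, π i ∈ Ω k → x (k + 1) i =
      y (δ (π i) (π i) k) i +
        ∑ j, F⁻¹ i j * (b j - ∑ l, A j l * y (δ (π i) (π l) k) l))
    (hkeep : ∀ k i, π i ∉ Ω k → x (k + 1) i = x k i) :
    Tendsto x atTop (nhds xstar) :=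
  stmt8_general A M F b xstar hsol π hQ Ω hΩ δ hδle hδlim x y hy hupd hkeep
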